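/- For every nonnegative integer k and real s, the polynomial g_k(s) = (1/k!) * sum_{l=0}^{k} (-1)^l * binomial(k,l) * s^l * (s+k-l)(s+k-l-1)...(s+1) has degree at most floor(k/2) in s. -/
import Mathlib


open Polynomial Finset

/-- The twisted Mellin coefficient polynomial
`g_k(s) = (1/k!) * ∑_{l=0}^k (-1)^l C(k,l) s^l s^{(k-l)}`,
where `s^{(m)} = (s+m)(s+m-1)⋯(s+1) = ∏_{j=1}^m (s+j)`. -/
noncomputable def gPoly (k : ℕ) : Polynomial ℝ :=
  ((Nat.factorial k : ℝ))⁻¹ • ∑ l ∈ Finset.range (k + 1),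
    ((-1 : ℝ) ^ l * (k.choose l : ℝ)) • (X ^ l * ∏ j ∈ Finset.range (k - l), (X + C ((j : ℝ) + 1)))

/-- The rising-factorial product `s^{(m)} = ∏_{j=1}^m (s+j)` as a polynomial. -/
noncomputable def Ppoly (m : ℕ) : Polynomial ℝ :=
  ∏ j ∈ Finset.range m, (X + C ((j : ℝ) + 1))

/-- The unscaled sum `k! * g_k`. -/
noncomputable def Fpoly (k : ℕ) : Polynomial ℝ :=
  ∑ l ∈ Finset.range (k + 1), ((-1 : ℝ) ^ l * (k.choose l : ℝ)) • (X ^ l * Ppoly (k - l))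

/-- Auxiliary summand `(-1)^l (k+2-l) C(k+1,l) X^l P_{k+1-l}`. -/
noncomputable def Tf (k l : ℕ) : Polynomial ℝ :=
  ((-1:ℝ)^l * (((k:ℝ)+2) - l) * (((k+1).choose l : ℕ) : ℝ)) • (X ^ l * Ppoly (k+1-l))

/-- Auxiliary summand `(-1)^l C(k+1,l) X^l P_{k+2-l}`. -/
noncomputable def Df (k l : ℕ) : Polynomial ℝ :=
  ((-1:ℝ)^l * (((k+1).choose l : ℕ) : ℝ)) • (X ^ l * Ppoly (k+2-l))

lemma Ppoly_succ (m : ℕ) : Ppoly (m+1) = Ppoly m * (X + C ((m:ℝ)+1)) :=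
  Finset.prod_range_succ _ _

lemma Df_split (k l : ℕ) (hl : l ≤ k + 1) :
    Df k l = X * (((-1:ℝ)^l * (((k+1).choose l : ℕ) : ℝ)) • (X ^ l * Ppoly (k+1-l))) + Tf k l := by
  have h1 : k + 2 - l = (k + 1 - l) + 1 := by omega
  have h2 : ((k+1-l : ℕ) : ℝ) + 1 = ((k:ℝ)+2) - l := by
    have := Nat.cast_sub (R := ℝ) hl
    rw [this]; push_cast; ring
  rw [Df, h1, Ppoly_succ, h2, Tf]
  simp only [smul_eq_C_mul, map_mul, map_sub, map_add, map_pow, map_neg, map_one, map_natCast]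
  ring

lemma sum_Df (k : ℕ) :
    ∑ l ∈ Finset.range (k+2), Df k l
      = X * Fpoly (k+1) + ∑ l ∈ Finset.range (k+2), Tf k l := by
  rw [Fpoly, Finset.mul_sum, ← Finset.sum_add_distrib]
  refine Finset.sum_congr rfl fun l hl => ?_
  exact Df_split k l (by simpa using Nat.lt_succ_iff.mp (Finset.mem_range.mp hl))

lemma Fpoly_eq_T (k : ℕ) :
    Fpoly (k+2) = ∑ l ∈ Finset.range (k+2), Tf k l := by
  have hstep : ∀ l, ((-1 : ℝ) ^ (l+1) * ((k+2).choose (l+1) : ℝ)) • (X ^ (l+1) * Ppoly (k+2 - (l+1)))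
      = -(X * (((-1 : ℝ) ^ l * ((k+1).choose l : ℝ)) • (X ^ l * Ppoly (k+1 - l)))) + Df k (l+1) := by
    intro l
    have h1 : k + 2 - (l+1) = k + 1 - l := by omega
    have h2 : ((k+2).choose (l+1) : ℝ) = ((k+1).choose l : ℝ) + ((k+1).choose (l+1) : ℝ) := by
      rw [← Nat.cast_add, Nat.choose_succ_succ]
    rw [Df, h1, h2]
    simp only [smul_eq_C_mul, map_mul, map_add, map_pow, map_neg, map_one, map_natCast]
    ring
  have hD0 : Df k 0 = Ppoly (k+2) := by simp [Df]
  have hDtop : Df k (k+2) = 0 := by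
    simp [Df, Nat.choose_eq_zero_of_lt (by omega : k + 1 < k + 2)]
  rw [Fpoly]
  rw [Finset.sum_range_succ' _ (k+2)]
  have hf0 : ((-1 : ℝ) ^ 0 * ((k+2).choose 0 : ℝ)) • (X ^ 0 * Ppoly (k+2 - 0)) = Ppoly (k+2) := by
    simp
  rw [hf0]
  have : ∑ l ∈ Finset.range (k+2),
      ((-1 : ℝ) ^ (l+1) * ((k+2).choose (l+1) : ℝ)) • (X ^ (l+1) * Ppoly (k+2 - (l+1)))
      = -(X * Fpoly (k+1)) + ∑ l ∈ Finset.range (k+2), Df k (l+1) := by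
    rw [Fpoly, Finset.mul_sum, ← Finset.sum_neg_distrib, ← Finset.sum_add_distrib]
    exact Finset.sum_congr rfl fun l _ => hstep l
  rw [this]
  have hshift : ∑ l ∈ Finset.range (k+2), Df k (l+1)
      = ∑ l ∈ Finset.range (k+2), Df k l + Df k (k+2) - Df k 0 := by
    have h3 := Finset.sum_range_succ' (Df k) (k+2)
    have h4 := Finset.sum_range_succ (Df k) (k+2)
    rw [h4] at h3
    linear_combination -h3
  rw [hshift, hDtop, hD0, sum_Df]
  ring

lemma Tf_succ (k l : ℕ) :
    Tf k (l+1)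
      = ((k:ℝ)+2) • (((-1:ℝ)^(l+1) * (((k+1).choose (l+1) : ℕ) : ℝ)) • (X ^ (l+1) * Ppoly (k - l)))
        + ((k:ℝ)+1) • (X * (((-1:ℝ)^l * ((k.choose l : ℕ) : ℝ)) • (X ^ l * Ppoly (k - l)))) := by
  have hc : ((k:ℝ)+1) * ((k.choose l : ℕ) : ℝ) = (((k+1).choose (l+1) : ℕ) : ℝ) * ((l:ℝ)+1) := by
    exact_mod_cast congrArg (Nat.cast (R := ℝ)) (Nat.add_one_mul_choose_eq k l)
  have hC := congrArg (C : ℝ → Polynomial ℝ) hc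
  simp only [map_mul, map_add, map_natCast, map_one] at hC
  have h1 : k + 1 - (l+1) = k - l := by omega
  rw [Tf, h1]
  simp only [smul_eq_C_mul, map_mul, map_sub, map_add, map_pow, map_neg, map_one, map_natCast]
  push_cast
  linear_combination ((-1:Polynomial ℝ)^(l+1) * X^(l+1) * Ppoly (k-l)) * hC

lemma Fpoly_rec (k : ℕ) :
    Fpoly (k+2) = ((k:ℝ)+2) • Fpoly (k+1) + ((k:ℝ)+1) • (X * Fpoly k) := by
  rw [Fpoly_eq_T, Finset.sum_range_succ' (Tf k) (k+1)]
  have hT0 : Tf k 0 = ((k:ℝ)+2) • Ppoly (k+1) := by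
    simp [Tf]
  have hexp : ((k:ℝ)+2) • Fpoly (k+1)
      = (∑ l ∈ Finset.range (k+1), ((k:ℝ)+2) •
          (((-1:ℝ)^(l+1) * (((k+1).choose (l+1) : ℕ) : ℝ)) • (X ^ (l+1) * Ppoly (k - l))))
        + ((k:ℝ)+2) • Ppoly (k+1) := by
    rw [Fpoly, Finset.sum_range_succ' _ (k+1), smul_add, Finset.smul_sum]
    simp [Nat.succ_sub_succ_eq_sub]
  have hexp2 : ((k:ℝ)+1) • (X * Fpoly k)
      = ∑ l ∈ Finset.range (k+1), ((k:ℝ)+1) •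
          (X * (((-1:ℝ)^l * ((k.choose l : ℕ) : ℝ)) • (X ^ l * Ppoly (k - l)))) := by
    rw [Fpoly, Finset.mul_sum, Finset.smul_sum]
  have hsum : ∑ l ∈ Finset.range (k+1), Tf k (l+1)
      = (∑ l ∈ Finset.range (k+1), ((k:ℝ)+2) •
          (((-1:ℝ)^(l+1) * (((k+1).choose (l+1) : ℕ) : ℝ)) • (X ^ (l+1) * Ppoly (k - l))))
        + ∑ l ∈ Finset.range (k+1), ((k:ℝ)+1) •
          (X * (((-1:ℝ)^l * ((k.choose l : ℕ) : ℝ)) • (X ^ l * Ppoly (k - l)))) := by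
    rw [← Finset.sum_add_distrib]
    exact Finset.sum_congr rfl fun l _ => Tf_succ k l
  rw [hT0, hsum, hexp, hexp2]
  ring

lemma Fpoly_zero : Fpoly 0 = 1 := by
  simp [Fpoly, Ppoly]

lemma Fpoly_one : Fpoly 1 = 1 := by
  simp [Fpoly, Ppoly, Finset.sum_range_succ]

lemma Fpoly_natDegree_le (k : ℕ) : (Fpoly k).natDegree ≤ k / 2 := by
  induction k using Nat.strong_induction_on with
  | _ k ih =>
    match k with
    | 0 => simp [Fpoly_zero]
    | 1 => simp [Fpoly_one]
    | (n+2) =>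
      rw [Fpoly_rec n]
      refine le_trans (natDegree_add_le _ _) (max_le ?_ ?_)
      · exact le_trans (natDegree_smul_le _ _) (le_trans (ih (n+1) (by omega)) (by omega))
      · refine le_trans (natDegree_smul_le _ _) ?_
        refine le_trans (natDegree_mul_le) ?_
        have := ih n (by omega)
        have hx : (X : Polynomial ℝ).natDegree = 1 := natDegree_X
        omega

/-- `g_k` has degree at most `⌊k/2⌋`. -/
theorem gPoly_natDegree_le (k : ℕ) : (gPoly k).natDegree ≤ k / 2 := by
  have h : gPoly k = ((Nat.factorial k : ℝ))⁻¹ • Fpoly k := rfl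
  rw [h]
  exact le_trans (natDegree_smul_le _ _) (Fpoly_natDegree_le k)
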